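/- arXiv:1606.08373 — 2 statements merged into one kernel-verified Lean document; each statement's English description precedes it below -/
import Mathlib

section
/- For the IMH sampler, with f ∈ L²₀(E, π): π(f²/ρ) < ∞ if and only if π(w·f²) < ∞ (equivalently, μ(w²·f²) < ∞). -/
open MeasureTheory ENNReal

/-!
Since `min 1 (w y / w x) ≤ w y / w x` and `μ(w) = 1`, we have `ρ ≤ 1 / w`, hence `w f² ≤ f² / ρ`.
Conversely, pick `c > 0` with `M = μ(w ≥ c) > 0`; integrating only over `{w ≥ c}` gives
`ρ(x) ≥ M min(1, c / w(x)) ≥ c M / (c + w(x))`, hence `f² / ρ ≤ (f² + w f² / c) / M`, which is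
`π`-integrable as soon as `π(w f²)` is finite. The identity `π(w f²) = μ(w² f²)` is the change of
density `dπ = w dμ`.
-/

section

variable {E : Type*} [MeasurableSpace E] {μ : Measure E} {w : E → ℝ}

lemma integrable_and_integral_eq_one_of_withDensity (hwm : AEStronglyMeasurable w μ)
    (hw0 : 0 ≤ᵐ[μ] w) [IsProbabilityMeasure (μ.withDensity fun x => ENNReal.ofReal (w x))] :
    Integrable w μ ∧ ∫ x, w x ∂μ = 1 := by
  have hlw : ∫⁻ x, ENNReal.ofReal (w x) ∂μ = 1 := by
    rw [← setLIntegral_univ, ← withDensity_apply _ MeasurableSet.univ, measure_univ]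
  refine ⟨⟨hwm, (hasFiniteIntegral_iff_ofReal hw0).2 (by simp [hlw])⟩, ?_⟩
  rw [integral_eq_lintegral_of_nonneg_ae hw0 hwm, hlw, toReal_one]

lemma exists_pos_measure_setOf_le [NeZero μ] (hw : ∀ x, 0 < w x) :
    ∃ c : ℝ, 0 < c ∧ 0 < μ {x | c ≤ w x} := by
  have hcover : ⋃ n : ℕ, {x | ((n : ℝ) + 1)⁻¹ ≤ w x} = Set.univ :=
    Set.eq_univ_of_forall fun x =>
      Set.mem_iUnion.2 ((exists_nat_one_div_lt (hw x)).imp fun _ hn => by simpa using hn.le)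
  obtain ⟨n, hn⟩ := exists_measure_pos_of_not_measure_iUnion_null (μ := μ)
    (by rw [hcover]; exact NeZero.ne _)
  exact ⟨_, by positivity, hn⟩

lemma integral_min_one_div_le [IsFiniteMeasure μ] (hwi : Integrable w μ) (t : ℝ) :
    ∫ y, min 1 (w y / t) ∂μ ≤ (∫ y, w y ∂μ) / t := by
  rw [← integral_div]
  exact integral_mono ((integrable_const 1).inf (hwi.div_const t)) (hwi.div_const t)
    fun y => min_le_right _ _

lemma min_one_div_mul_measureReal_le_integral [IsFiniteMeasure μ] (hwm : Measurable w)
    (hw0 : ∀ y, 0 ≤ w y) {t : ℝ} (ht : 0 ≤ t) (c : ℝ) :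
    min 1 (c / t) * μ.real {y | c ≤ w y} ≤ ∫ y, min 1 (w y / t) ∂μ := by
  have hs : MeasurableSet {y | c ≤ w y} := measurableSet_le measurable_const hwm
  have hint : Integrable (fun y => min 1 (w y / t)) μ :=
    Integrable.of_bound (measurable_const.min (hwm.div_const t)).aestronglyMeasurable 1
      (Filter.Eventually.of_forall fun y => by
        rw [Real.norm_eq_abs, abs_of_nonneg (le_min zero_le_one (by have := hw0 y; positivity))]
        exact min_le_left _ _)
  rw [mul_comm, ← smul_eq_mul, ← integral_indicator_const _ hs]
  refine integral_mono ((integrable_const _).indicator hs) hint fun y => ?_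
  by_cases hy : y ∈ {y | c ≤ w y}
  · rw [Set.indicator_of_mem hy]
    exact min_le_min le_rfl (div_le_div_of_nonneg_right hy ht)
  · rw [Set.indicator_of_notMem hy]
    exact le_min zero_le_one (by have := hw0 y; positivity)

lemma div_add_le_min_one_div {c t : ℝ} (hc : 0 < c) (ht : 0 < t) :
    c / (c + t) ≤ min 1 (c / t) :=
  le_min ((div_le_one (by positivity)).2 (by linarith))
    (div_le_div_of_nonneg_left hc.le ht (by linarith))

lemma exists_inv_add_mul_le_integral_min_one_div [IsFiniteMeasure μ] [NeZero μ]
    (hwm : Measurable w) (hw : ∀ x, 0 < w x) :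
    ∃ a b : ℝ, 0 < a ∧ 0 ≤ b ∧
      ∀ t, 0 < t → (a + b * t)⁻¹ ≤ ∫ y, min 1 (w y / t) ∂μ := by
  obtain ⟨c, hc, hs⟩ := exists_pos_measure_setOf_le (μ := μ) hw
  set M := μ.real {y | c ≤ w y}
  have hM : 0 < M := ENNReal.toReal_pos hs.ne' (measure_ne_top _ _)
  refine ⟨M⁻¹, (c * M)⁻¹, by positivity, by positivity, fun t ht => ?_⟩
  calc (M⁻¹ + (c * M)⁻¹ * t)⁻¹ = c / (c + t) * M := by field_simp
    _ ≤ min 1 (c / t) * M := by gcongr; exact div_add_le_min_one_div hc ht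
    _ ≤ _ := min_one_div_mul_measureReal_le_integral hwm (fun y => (hw y).le) ht.le c

lemma lintegral_ofReal_add_mul_lt_top {ν : Measure E} {g h : E → ℝ} {a b : ℝ} (ha : 0 ≤ a)
    (hb : 0 ≤ b) (hg : Measurable g)
    (hgi : ∫⁻ x, ENNReal.ofReal (g x) ∂ν < ⊤) (hhi : ∫⁻ x, ENNReal.ofReal (h x) ∂ν < ⊤) :
    ∫⁻ x, ENNReal.ofReal (a * g x + b * h x) ∂ν < ⊤ := by
  calc ∫⁻ x, ENNReal.ofReal (a * g x + b * h x) ∂ν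
      ≤ ∫⁻ x, (ENNReal.ofReal a * ENNReal.ofReal (g x)
          + ENNReal.ofReal b * ENNReal.ofReal (h x)) ∂ν :=
        lintegral_mono fun x => by
          rw [← ENNReal.ofReal_mul ha, ← ENNReal.ofReal_mul hb]
          exact ENNReal.ofReal_add_le
    _ = ENNReal.ofReal a * ∫⁻ x, ENNReal.ofReal (g x) ∂ν
          + ENNReal.ofReal b * ∫⁻ x, ENNReal.ofReal (h x) ∂ν := by
        rw [lintegral_add_left (hg.ennreal_ofReal.const_mul _),
          lintegral_const_mul _ hg.ennreal_ofReal, lintegral_const_mul' _ _ ofReal_ne_top]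
    _ < ⊤ := add_lt_top.2 ⟨mul_lt_top ofReal_lt_top hgi, mul_lt_top ofReal_lt_top hhi⟩

end

theorem stmt7_general {E : Type*} [MeasurableSpace E] (μ π : Measure E)
    [IsProbabilityMeasure μ] [IsProbabilityMeasure π]
    (w : E → ℝ) (hwm : Measurable w) (hw : ∀ x, 0 < w x)
    (hdens : π = μ.withDensity (fun x => ENNReal.ofReal (w x)))
    (ρ : E → ℝ) (hρ : ∀ x, ρ x = ∫ y, min 1 (w y / w x) ∂μ)
    (f : E → ℝ) (hfm : Measurable f)
    (hf2 : ∫⁻ x, ENNReal.ofReal (f x ^ 2) ∂π < ⊤) :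
    (∫⁻ x, ENNReal.ofReal (f x ^ 2 / ρ x) ∂π < ⊤
        ↔ ∫⁻ x, ENNReal.ofReal (w x * f x ^ 2) ∂π < ⊤) ∧
      ∫⁻ x, ENNReal.ofReal (w x * f x ^ 2) ∂π
        = ∫⁻ x, ENNReal.ofReal (w x ^ 2 * f x ^ 2) ∂μ := by
  subst hdens
  obtain ⟨hwi, hw1⟩ := integrable_and_integral_eq_one_of_withDensity (μ := μ)
    hwm.aestronglyMeasurable (.of_forall fun x => (hw x).le)
  obtain ⟨a, b, ha, hb, hρ_lower⟩ := exists_inv_add_mul_le_integral_min_one_div (μ := μ) hwm hw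
  have hab_pos : ∀ x, 0 < (a + b * w x)⁻¹ := fun x => by have := hw x; positivity
  have hρ_ge : ∀ x, (a + b * w x)⁻¹ ≤ ρ x := fun x => hρ x ▸ hρ_lower _ (hw x)
  have hρ_le : ∀ x, ρ x ≤ (w x)⁻¹ := fun x => by
    simpa [hρ x, hw1] using integral_min_one_div_le hwi (w x)
  refine ⟨⟨fun h => (lintegral_mono fun x => ofReal_le_ofReal ?_).trans_lt h, fun h => ?_⟩, ?_⟩
  · calc w x * f x ^ 2 = f x ^ 2 / (w x)⁻¹ := by rw [div_inv_eq_mul, mul_comm]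
      _ ≤ f x ^ 2 / ρ x :=
        div_le_div_of_nonneg_left (sq_nonneg _) ((hab_pos x).trans_le (hρ_ge x)) (hρ_le x)
  · refine (lintegral_mono fun x => ofReal_le_ofReal ?_).trans_lt
      (lintegral_ofReal_add_mul_lt_top ha.le hb (hfm.pow_const 2) hf2 h)
    calc f x ^ 2 / ρ x ≤ f x ^ 2 / (a + b * w x)⁻¹ :=
          div_le_div_of_nonneg_left (sq_nonneg _) (hab_pos x) (hρ_ge x)
      _ = a * f x ^ 2 + b * (w x * f x ^ 2) := by rw [div_inv_eq_mul]; ring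
  · rw [lintegral_withDensity_eq_lintegral_mul_non_measurable _ hwm.ennreal_ofReal
      (.of_forall fun _ => ofReal_lt_top)]
    refine lintegral_congr fun x => ?_
    rw [Pi.mul_apply, ← ofReal_mul (hw x).le]
    ring_nf

/-- For the IMH sampler with `w = dπ/dμ > 0` and
`ρ(x) = ∫ min(1, w(y)/w(x)) μ(dy)`, and `f ∈ L²₀(E, π)`:
`π(f²/ρ) < ∞` if and only if `π(w·f²) < ∞`; moreover
`π(w·f²) = μ(w²·f²)`, so the condition is equivalently `μ(w²·f²) < ∞`. -/
theorem stmt7 {E : Type*} [MeasurableSpace E] (μ π : Measure E)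
    [IsProbabilityMeasure μ] [IsProbabilityMeasure π]
    (w : E → ℝ) (hwm : Measurable w) (hw : ∀ x, 0 < w x)
    (hdens : π = μ.withDensity (fun x => ENNReal.ofReal (w x)))
    (ρ : E → ℝ) (hρ : ∀ x, ρ x = ∫ y, min 1 (w y / w x) ∂μ)
    (f : E → ℝ) (hfm : Measurable f) (hf0 : ∫ x, f x ∂π = 0)
    (hf2 : ∫⁻ x, ENNReal.ofReal (f x ^ 2) ∂π < ⊤) :
    (∫⁻ x, ENNReal.ofReal (f x ^ 2 / ρ x) ∂π < ⊤
        ↔ ∫⁻ x, ENNReal.ofReal (w x * f x ^ 2) ∂π < ⊤) ∧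
      ∫⁻ x, ENNReal.ofReal (w x * f x ^ 2) ∂π
        = ∫⁻ x, ENNReal.ofReal (w x ^ 2 * f x ^ 2) ∂μ :=
  stmt7_general μ π w hwm hw hdens ρ hρ f hfm hf2
end

section
/- Let μ(dx,du) = ν(dx)μ_x(du) on a product space X × U, let Q be a ν-reversible sub-Markov kernel on X with ρ(x) = Q(x, X), and define kernels P̄(x, A) = Q(x, A) + (1−ρ(x))1_A(x) on X and P(x,u; A) = ∫_A Q(x,dy)μ_y(dv) + (1−ρ(x))1_A(x,u) on X × U. Then min(Gap(P̄), ρ*) ≤ Gap(P) ≤ Gap(P̄), where ρ* = ν-ess inf ρ. -/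
open MeasureTheory ProbabilityTheory ENNReal

/-- The Dirichlet form `𝓔_K(g) = (1/2)∫ ν(dx) K(x,dy) (g(y) − g(x))²`. -/
noncomputable def dirichletForm {α : Type*} [MeasurableSpace α] (ν : Measure α)
    (K : α → Measure α) (g : α → ℝ) : ℝ≥0∞ :=
  (1 / 2) * ∫⁻ x, ∫⁻ y, ENNReal.ofReal ((g y - g x) ^ 2) ∂(K x) ∂ν

/-- The right spectral gap of a `ν`-reversible kernel `K`:
`Gap(K) = inf { 𝓔_K(g)/var_ν(g) : g ∈ L²(ν), var_ν(g) > 0 }`. -/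
noncomputable def spectralGap {α : Type*} [MeasurableSpace α] (ν : Measure α)
    (K : α → Measure α) : ℝ≥0∞ :=
  ⨅ g : {g : α → ℝ // MemLp g 2 ν ∧ evariance g ν ≠ 0},
    dirichletForm ν K g.1 / evariance g.1 ν

/-!
Write `f̄ = fiberMean κ f` and `h = fiberVar κ f` for the fiberwise mean and variance of `f`.
The law of total variance gives `var_μ f = ∫ h dν + var_ν f̄`. Expanding the Dirichlet form of
`P` fiberwise gives the same kind of splitting, `𝓔_P(f) = ⟨ρ, h⟩_ν + 𝓔_P̄(f̄)`; here the term
`∫∫ h(y) Q(x, dy) ν(dx)` coming from the endpoint of a `Q`-step is turned into `⟨ρ, h⟩_ν` by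
reversibility. Then `⟨ρ, h⟩_ν ≥ ρ* ∫ h dν` and `𝓔_P̄(f̄) ≥ Gap(P̄) var_ν f̄` give the lower bound,
and the upper bound is the same identity for functions of `x` alone, for which `h = 0`.
The holding parts of both kernels never contribute to a Dirichlet form.
-/

section DirichletForm

variable {α : Type*} [MeasurableSpace α] {ν : Measure α} {K : α → Measure α} {f g : α → ℝ}

def PreservesNull (ν : Measure α) (K : α → Measure α) : Prop :=
  ∀ ⦃s⦄, MeasurableSet s → ν s = 0 → ∀ᵐ x ∂ν, K x s = 0

lemma PreservesNull.ae_ae (hK : PreservesNull ν K) {p : α → Prop} (hp : ∀ᵐ x ∂ν, p x) :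
    ∀ᵐ x ∂ν, ∀ᵐ y ∂K x, p y := by
  filter_upwards [hK (measurableSet_toMeasurable ν _) (by rwa [measure_toMeasurable])] with x hx
  exact measure_mono_null (subset_toMeasurable _ _) hx

lemma PreservesNull.add_smul_dirac (hK : PreservesNull ν K) (c : α → ℝ≥0∞) :
    PreservesNull ν fun x => K x + c x • Measure.dirac x := by
  intro s hs h0
  filter_upwards [hK hs h0, measure_eq_zero_iff_ae_notMem.1 h0] with x hKx hx
  simp [hKx, Measure.dirac_apply' x hs, hx]

lemma two_mul_dirichletForm (ν : Measure α) (K : α → Measure α) (g : α → ℝ) :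
    2 * dirichletForm ν K g = ∫⁻ x, ∫⁻ y, ENNReal.ofReal ((g y - g x) ^ 2) ∂(K x) ∂ν := by
  rw [dirichletForm, ← mul_assoc, one_div, ENNReal.mul_inv_cancel two_ne_zero ofNat_ne_top,
    one_mul]

lemma dirichletForm_congr_ae (hK : PreservesNull ν K) (h : f =ᵐ[ν] g) :
    dirichletForm ν K f = dirichletForm ν K g := by
  unfold dirichletForm
  congr 1
  refine lintegral_congr_ae ?_
  filter_upwards [h, hK.ae_ae h] with x hx hKx
  exact lintegral_congr_ae (hKx.mono fun y hy => by simp only [hx, hy])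

lemma dirichletForm_add_smul_dirac (c : α → ℝ≥0∞) (hg : Measurable g) :
    dirichletForm ν (fun x => K x + c x • Measure.dirac x) g = dirichletForm ν K g := by
  unfold dirichletForm
  congr 2 with x
  rw [lintegral_add_measure, lintegral_smul_measure, lintegral_dirac' x (by fun_prop)]
  simp

lemma spectralGap_le (hg : MemLp g 2 ν) (h0 : evariance g ν ≠ 0) :
    spectralGap ν K ≤ dirichletForm ν K g / evariance g ν :=
  iInf_le_of_le ⟨g, hg, h0⟩ le_rfl

lemma spectralGap_mul_evariance_le [IsFiniteMeasure ν] (hg : MemLp g 2 ν) :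
    spectralGap ν K * evariance g ν ≤ dirichletForm ν K g := by
  rcases eq_or_ne (evariance g ν) 0 with h0 | h0
  · simp [h0]
  · exact (ENNReal.le_div_iff_mul_le (.inl h0) (.inl hg.evariance_ne_top)).1 (spectralGap_le hg h0)

lemma le_spectralGap_of_measurable {c : ℝ≥0∞} (hK : PreservesNull ν K)
    (h : ∀ g, Measurable g → MemLp g 2 ν → evariance g ν ≠ 0 →
      c ≤ dirichletForm ν K g / evariance g ν) :
    c ≤ spectralGap ν K := by
  refine le_iInf fun ⟨f, hf, hvar⟩ => ?_
  have hfg := hf.1.ae_eq_mk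
  rw [evariance_congr hfg] at hvar
  change c ≤ dirichletForm ν K f / evariance f ν
  rw [evariance_congr hfg, dirichletForm_congr_ae hK hfg]
  exact h _ hf.1.stronglyMeasurable_mk.measurable (hf.ae_eq hfg) hvar

end DirichletForm

lemma essInf_mul_lintegral_le {α : Type*} [MeasurableSpace α] {ν : Measure α}
    {ρ h : α → ℝ≥0∞} (hh : Measurable h) :
    essInf ρ ν * ∫⁻ x, h x ∂ν ≤ ∫⁻ x, ρ x * h x ∂ν := by
  rw [← lintegral_const_mul _ hh]
  exact lintegral_mono_ae ((ae_essInf_le (f := ρ)).mono fun x hx => mul_le_mul_left hx _)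

lemma lintegral_ofReal_sq_sub_eq_evariance_add {Ω : Type*} [MeasurableSpace Ω] {τ : Measure Ω}
    [IsProbabilityMeasure τ] {b : Ω → ℝ} (hb : MemLp b 2 τ) (c : ℝ) :
    ∫⁻ ω, ENNReal.ofReal ((b ω - c) ^ 2) ∂τ = evariance b τ + ENNReal.ofReal ((τ[b] - c) ^ 2) := by
  have hbc : MemLp (fun ω => b ω - c) 2 τ := hb.sub (memLp_const c)
  rw [← ofReal_integral_eq_lintegral_ofReal hbc.integrable_sq (ae_of_all _ fun _ => sq_nonneg _),
    ← hb.ofReal_variance_eq, ← ENNReal.ofReal_add (variance_nonneg _ _) (sq_nonneg _)]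
  have h := variance_eq_sub hbc
  rw [variance_sub_const hb.1 c, integral_sub (hb.integrable one_le_two) (integrable_const c),
    integral_const] at h
  simp only [probReal_univ, smul_eq_mul, one_mul] at h
  rw [h, sub_add_cancel]
  rfl

namespace ProbabilityTheory.Kernel.IsReversible

variable {X : Type*} [MeasurableSpace X] {ν : Measure X} {Q : Kernel X X}

lemma preservesNull (hQ : Q.IsReversible ν) : PreservesNull ν Q := by
  intro s hs h0
  have hint : ∫⁻ x, Q x s ∂ν = 0 := by
    simpa [setLIntegral_measure_zero _ _ h0] using hQ MeasurableSet.univ hs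
  exact (lintegral_eq_zero_iff (Q.measurable_coe hs)).1 hint

lemma map_swap_compProd [IsFiniteMeasure ν] [IsFiniteKernel Q] (hQ : Q.IsReversible ν) :
    (ν ⊗ₘ Q).map Prod.swap = ν ⊗ₘ Q := by
  refine ext_of_generate_finite _ generateFrom_prod.symm isPiSystem_prod ?_ ?_
  · rintro _ ⟨A, hA, B, hB, rfl⟩
    rw [Measure.map_apply measurable_swap (hA.prod hB), Set.preimage_swap_prod,
      Measure.compProd_apply_prod hB hA, Measure.compProd_apply_prod hA hB, hQ hB hA]
  · rw [Measure.map_apply measurable_swap MeasurableSet.univ, Set.preimage_univ]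

lemma lintegral_lintegral_comp_snd [IsFiniteMeasure ν] [IsFiniteKernel Q]
    (hQ : Q.IsReversible ν) {h : X → ℝ≥0∞} (hh : Measurable h) :
    ∫⁻ x, ∫⁻ y, h y ∂Q x ∂ν = ∫⁻ x, Q x Set.univ * h x ∂ν := by
  calc ∫⁻ x, ∫⁻ y, h y ∂Q x ∂ν = ∫⁻ p, h p.2 ∂(ν ⊗ₘ Q) :=
        (Measure.lintegral_compProd (hh.comp measurable_snd)).symm
    _ = ∫⁻ p, h p.2 ∂((ν ⊗ₘ Q).map Prod.swap) := by rw [hQ.map_swap_compProd]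
    _ = ∫⁻ p, h p.1 ∂(ν ⊗ₘ Q) :=
        MeasureTheory.lintegral_map (hh.comp measurable_snd) measurable_swap
    _ = ∫⁻ x, Q x Set.univ * h x ∂ν := by
        rw [Measure.lintegral_compProd (f := fun p => h p.1) (hh.comp measurable_fst)]
        simp [mul_comm]

end ProbabilityTheory.Kernel.IsReversible

lemma PreservesNull.compProd {X U : Type*} [MeasurableSpace X] [MeasurableSpace U]
    {ν : Measure X} [SFinite ν] {Q : Kernel X X} [IsSFiniteKernel Q] {κ : Kernel X U}
    [IsMarkovKernel κ] (hQ : PreservesNull ν Q) :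
    PreservesNull (ν ⊗ₘ κ) fun p => Q p.1 ⊗ₘ κ := by
  intro N hN h0
  have hsec : ∀ᵐ y ∂ν, κ y (Prod.mk y ⁻¹' N) = 0 := by
    rwa [Measure.compProd_apply hN,
      lintegral_eq_zero_iff (Kernel.measurable_kernel_prodMk_left hN)] at h0
  refine ae_of_ae_map (p := fun x => (Q x ⊗ₘ κ) N = 0) measurable_fst.aemeasurable ?_
  rw [← Measure.fst, Measure.fst_compProd]
  filter_upwards [hQ.ae_ae hsec] with x hx
  rw [Measure.compProd_apply hN, lintegral_congr_ae hx, lintegral_zero]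

section Fiber

variable {X U : Type*} [MeasurableSpace X] [MeasurableSpace U]

noncomputable def fiberMean (κ : Kernel X U) (g : X × U → ℝ) (x : X) : ℝ := ∫ u, g (x, u) ∂κ x

noncomputable def fiberVar (κ : Kernel X U) (g : X × U → ℝ) (x : X) : ℝ≥0∞ :=
  evariance (fun u => g (x, u)) (κ x)

variable {ν : Measure X} {κ : Kernel X U} {g : X × U → ℝ}

lemma measurable_fiberMean [IsSFiniteKernel κ] (hg : Measurable g) :
    Measurable (fiberMean κ g) :=
  hg.stronglyMeasurable.integral_kernel_prod_right'.measurable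

lemma measurable_fiberVar [IsSFiniteKernel κ] (hg : Measurable g) :
    Measurable (fiberVar κ g) := by
  change Measurable fun x => evariance (fun u => g (x, u)) (κ x)
  simp_rw [evariance_eq_lintegral_ofReal]
  have := measurable_fiberMean (κ := κ) hg
  exact Measurable.lintegral_kernel_prod_right'
    (by fun_prop : Measurable fun p : X × U => ENNReal.ofReal ((g p - fiberMean κ g p.1) ^ 2))

lemma ae_memLp_fiber [SFinite ν] [IsSFiniteKernel κ] (hg : Measurable g)
    (hg2 : MemLp g 2 (ν ⊗ₘ κ)) : ∀ᵐ x ∂ν, MemLp (fun u => g (x, u)) 2 (κ x) := by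
  have hsq := hg2.integrable_sq
  filter_upwards [((Measure.integrable_compProd_iff hsq.1).1 hsq).1] with x hx
  exact (memLp_two_iff_integrable_sq (hg.comp measurable_prodMk_left).aestronglyMeasurable).2 hx

lemma fiberMean_comp_fst [IsMarkovKernel κ] (g : X → ℝ) : fiberMean κ (fun p => g p.1) = g := by
  ext x
  simp [fiberMean]

lemma fiberVar_comp_fst [IsMarkovKernel κ] (g : X → ℝ) : fiberVar κ (fun p => g p.1) = 0 := by
  ext x
  simp [fiberVar, evariance]

theorem evariance_compProd [IsFiniteMeasure ν] [IsMarkovKernel κ] (hg : Measurable g)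
    (hg2 : MemLp g 2 (ν ⊗ₘ κ)) :
    evariance g (ν ⊗ₘ κ) = ∫⁻ x, fiberVar κ g x ∂ν + evariance (fiberMean κ g) ν := by
  have hmean : (ν ⊗ₘ κ)[g] = ν[fiberMean κ g] :=
    Measure.integral_compProd (hg2.integrable one_le_two)
  rw [evariance_eq_lintegral_ofReal, evariance_eq_lintegral_ofReal, hmean,
    Measure.lintegral_compProd (by fun_prop), ← lintegral_add_left (measurable_fiberVar hg)]
  refine lintegral_congr_ae ?_
  filter_upwards [ae_memLp_fiber hg hg2] with x hx
  exact lintegral_ofReal_sq_sub_eq_evariance_add hx _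

lemma lintegral_lintegral_compProd_sq_sub [IsMarkovKernel κ] {η : Measure X} [SFinite η]
    (hg : Measurable g) {x : X} (hx : MemLp (fun u => g (x, u)) 2 (κ x))
    (hη : ∀ᵐ y ∂η, MemLp (fun v => g (y, v)) 2 (κ y)) :
    ∫⁻ u, ∫⁻ q, ENNReal.ofReal ((g q - g (x, u)) ^ 2) ∂(η ⊗ₘ κ) ∂κ x
      = ∫⁻ y, (fiberVar κ g y + (fiberVar κ g x
          + ENNReal.ofReal ((fiberMean κ g y - fiberMean κ g x) ^ 2))) ∂η := by
  have hm := measurable_fiberMean (κ := κ) hg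
  have hH := measurable_fiberVar (κ := κ) hg
  calc ∫⁻ u, ∫⁻ q, ENNReal.ofReal ((g q - g (x, u)) ^ 2) ∂(η ⊗ₘ κ) ∂κ x
      = ∫⁻ u, ∫⁻ y, (fiberVar κ g y
          + ENNReal.ofReal ((fiberMean κ g y - g (x, u)) ^ 2)) ∂η ∂κ x := by
        refine lintegral_congr fun u => ?_
        rw [Measure.lintegral_compProd (by fun_prop)]
        exact lintegral_congr_ae
          (hη.mono fun y hy => lintegral_ofReal_sq_sub_eq_evariance_add hy _)
    _ = ∫⁻ y, ∫⁻ u, (fiberVar κ g y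
          + ENNReal.ofReal ((fiberMean κ g y - g (x, u)) ^ 2)) ∂κ x ∂η :=
        lintegral_lintegral_swap (by fun_prop)
    _ = _ := by
        refine lintegral_congr fun y => ?_
        rw [lintegral_add_left measurable_const, lintegral_const, measure_univ, mul_one]
        simp_rw [sub_sq_comm (fiberMean κ g y)]
        exact congrArg _ (lintegral_ofReal_sq_sub_eq_evariance_add hx _)

theorem dirichletForm_compProd [IsFiniteMeasure ν] [IsMarkovKernel κ] {Q : Kernel X X}
    [IsFiniteKernel Q] (hQ : Q.IsReversible ν) (hg : Measurable g) (hg2 : MemLp g 2 (ν ⊗ₘ κ)) :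
    dirichletForm (ν ⊗ₘ κ) (fun p => Q p.1 ⊗ₘ κ) g
      = ∫⁻ x, Q x Set.univ * fiberVar κ g x ∂ν + dirichletForm ν Q (fiberMean κ g) := by
  have hH := measurable_fiberVar (κ := κ) hg
  have hfib := ae_memLp_fiber hg hg2
  have hΦ : Measurable fun p : X × U =>
      ∫⁻ q, ENNReal.ofReal ((g q - g p) ^ 2) ∂(Q p.1 ⊗ₘ κ) := by
    have hK : ∀ x, (Q ⊗ₖ Kernel.prodMkLeft X κ) x = Q x ⊗ₘ κ := fun x => by
      rw [Kernel.compProd_apply_eq_compProd_sectR]; rfl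
    simp_rw [← hK]
    exact Measurable.lintegral_kernel_prod_right'
      (κ := (Q ⊗ₖ Kernel.prodMkLeft X κ).comap Prod.fst measurable_fst)
      (f := fun r => ENNReal.ofReal ((g r.2 - g r.1) ^ 2)) (by fun_prop)
  rw [← ENNReal.mul_right_inj two_ne_zero ofNat_ne_top, mul_add, two_mul_dirichletForm,
    two_mul_dirichletForm, two_mul, add_assoc]
  nth_rw 1 [← hQ.lintegral_lintegral_comp_snd hH]
  rw [Measure.lintegral_compProd hΦ,
    ← lintegral_add_left (f := fun x => Q x Set.univ * fiberVar κ g x)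
      ((Q.measurable_coe .univ).mul hH),
    ← lintegral_add_left hH.lintegral_kernel]
  refine lintegral_congr_ae ?_
  filter_upwards [hfib, hQ.preservesNull.ae_ae hfib] with x hx hQx
  rw [lintegral_lintegral_compProd_sq_sub hg hx hQx, lintegral_add_left hH,
    lintegral_add_left measurable_const, lintegral_const, mul_comm]

end Fiber

section SpectralGap

variable {X U : Type*} [MeasurableSpace X] [MeasurableSpace U] {ν : Measure X}
  [IsFiniteMeasure ν] {κ : Kernel X U} [IsMarkovKernel κ] {Q : Kernel X X} [IsFiniteKernel Q]

theorem min_spectralGap_essInf_le_spectralGap_compProd (hQ : Q.IsReversible ν)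
    (c : X → ℝ≥0∞) (d : X × U → ℝ≥0∞) :
    min (spectralGap ν fun x => Q x + c x • Measure.dirac x) (essInf (fun x => Q x Set.univ) ν)
      ≤ spectralGap (ν ⊗ₘ κ) fun p => Q p.1 ⊗ₘ κ + d p • Measure.dirac p := by
  refine le_spectralGap_of_measurable (hQ.preservesNull.compProd.add_smul_dirac d)
    fun g hg hg2 hvar => ?_
  have hm := measurable_fiberMean (κ := κ) hg
  have htotal := evariance_compProd hg hg2
  have hm2 : MemLp (fiberMean κ g) 2 ν :=
    (evariance_lt_top_iff_memLp hm.aestronglyMeasurable).1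
      (le_add_self.trans_lt (htotal ▸ hg2.evariance_lt_top))
  rw [ENNReal.le_div_iff_mul_le (.inl hvar) (.inl hg2.evariance_ne_top),
    dirichletForm_add_smul_dirac _ hg, dirichletForm_compProd hQ hg hg2, htotal, mul_add]
  gcongr ?_ + ?_
  · exact (mul_le_mul_left (min_le_right _ _) _).trans
      (essInf_mul_lintegral_le (measurable_fiberVar hg))
  · calc _ ≤ (spectralGap ν fun x => Q x + c x • Measure.dirac x) * evariance (fiberMean κ g) ν :=
          mul_le_mul_left (min_le_left _ _) _
      _ ≤ _ := spectralGap_mul_evariance_le hm2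
      _ = _ := dirichletForm_add_smul_dirac _ hm

theorem spectralGap_compProd_le (hQ : Q.IsReversible ν) (c : X → ℝ≥0∞) (d : X × U → ℝ≥0∞) :
    (spectralGap (ν ⊗ₘ κ) fun p => Q p.1 ⊗ₘ κ + d p • Measure.dirac p)
      ≤ spectralGap ν fun x => Q x + c x • Measure.dirac x := by
  refine le_spectralGap_of_measurable (hQ.preservesNull.add_smul_dirac c)
    fun g hg hg2 hvar => ?_
  have hf : Measurable fun p : X × U => g p.1 := hg.comp measurable_fst
  have hf2 : MemLp (fun p : X × U => g p.1) 2 (ν ⊗ₘ κ) :=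
    hg2.comp_measurePreserving ⟨measurable_fst, Measure.fst_compProd ν κ⟩
  have hvar_eq : evariance (fun p : X × U => g p.1) (ν ⊗ₘ κ) = evariance g ν := by
    simp [evariance_compProd hf hf2, fiberVar_comp_fst, fiberMean_comp_fst]
  have hdf_eq : dirichletForm (ν ⊗ₘ κ) (fun p => Q p.1 ⊗ₘ κ + d p • Measure.dirac p)
      (fun p => g p.1) = dirichletForm ν (fun x => Q x + c x • Measure.dirac x) g := by
    simp [dirichletForm_add_smul_dirac _ hf, dirichletForm_add_smul_dirac _ hg,
      dirichletForm_compProd hQ hf hf2, fiberVar_comp_fst, fiberMean_comp_fst]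
  rw [← hvar_eq, ← hdf_eq]
  exact spectralGap_le hf2 (hvar_eq ▸ hvar)

end SpectralGap

theorem stmt11_general {X U : Type*} [MeasurableSpace X] [MeasurableSpace U]
    (ν : Measure X) [IsProbabilityMeasure ν] (κ : ProbabilityTheory.Kernel X U)
    [ProbabilityTheory.IsMarkovKernel κ]
    (Q : ProbabilityTheory.Kernel X X)
    (hsub : ∀ x, Q x Set.univ ≤ 1)
    (hrev : ∀ A B : Set X, MeasurableSet A → MeasurableSet B →
      ∫⁻ x in A, Q x B ∂ν = ∫⁻ x in B, Q x A ∂ν) :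
    min (spectralGap ν (fun x => Q x + (1 - Q x Set.univ) • Measure.dirac x))
        (essInf (fun x => Q x Set.univ) ν)
      ≤ spectralGap (ν.compProd κ)
          (fun p => (Q p.1).compProd κ + (1 - Q p.1 Set.univ) • Measure.dirac p) ∧
    spectralGap (ν.compProd κ)
        (fun p => (Q p.1).compProd κ + (1 - Q p.1 Set.univ) • Measure.dirac p)
      ≤ spectralGap ν (fun x => Q x + (1 - Q x Set.univ) • Measure.dirac x) := by
  have : IsFiniteKernel Q := ⟨⟨1, one_lt_top, hsub⟩⟩
  have hQ : Q.IsReversible ν := hrev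
  exact ⟨min_spectralGap_essInf_le_spectralGap_compProd hQ _ fun p => 1 - Q p.1 Set.univ,
    spectralGap_compProd_le hQ _ fun p => 1 - Q p.1 Set.univ⟩

/-- Let `μ(dx,du) = ν(dx)μ_x(du)` on `X × U` (with `{μ_x}` given by a Markov kernel `κ`),
let `Q` be a `ν`-reversible sub-Markov kernel on `X` with `ρ(x) = Q(x,X)`, and define
`P̄(x,·) = Q(x,·) + (1−ρ(x)) δ_x` on `X` and
`P(x,u;·) = (Q x) ⊗ₘ κ + (1−ρ(x)) δ_{(x,u)}` on `X × U`. Then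
`min(Gap(P̄), ρ*) ≤ Gap(P) ≤ Gap(P̄)`, where `ρ* = ν`-ess inf `ρ`. -/
theorem stmt11 {X U : Type*} [MeasurableSpace X] [MeasurableSpace U]
    (ν : Measure X) [IsProbabilityMeasure ν] (κ : ProbabilityTheory.Kernel X U)
    [ProbabilityTheory.IsMarkovKernel κ]
    (Q : ProbabilityTheory.Kernel X X) [ProbabilityTheory.IsSFiniteKernel Q]
    (hsub : ∀ x, Q x Set.univ ≤ 1)
    (hrev : ∀ A B : Set X, MeasurableSet A → MeasurableSet B →
      ∫⁻ x in A, Q x B ∂ν = ∫⁻ x in B, Q x A ∂ν) :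
    min (spectralGap ν (fun x => Q x + (1 - Q x Set.univ) • Measure.dirac x))
        (essInf (fun x => Q x Set.univ) ν)
      ≤ spectralGap (ν.compProd κ)
          (fun p => (Q p.1).compProd κ + (1 - Q p.1 Set.univ) • Measure.dirac p) ∧
    spectralGap (ν.compProd κ)
        (fun p => (Q p.1).compProd κ + (1 - Q p.1 Set.univ) • Measure.dirac p)
      ≤ spectralGap ν (fun x => Q x + (1 - Q x Set.univ) • Measure.dirac x) :=
  stmt11_general ν κ Q hsub hrev
end
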